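/- Let Λ = (λ_k)_{k≥0} be a strictly increasing sequence of positive real numbers satisfying the Müntz condition Σ_k 1/λ_k < ∞, and let V_Λ be the restriction of the Volterra operator to M_Λ^1, viewed as an operator into C([0,1]). Then V_Λ is not weakly compact: the closure, in the weak topology of C([0,1]), of the image under V of the closed unit ball of M_Λ^1 is not weakly compact. -/

import Mathlib

/-!
The normalized monomials `(λ_k + 1) t^{λ_k}` have norm one in `M_Λ^1`, and `V` maps them to
`x^{λ_k + 1}`. By the Müntz condition `λ_k → ∞`, so these images converge pointwise on `[0,1]` to
the indicator of `{1}`. If `V` were weakly compact, the images would have a weak cluster point;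
since point evaluations are continuous functionals, it would be a continuous function equal to
that discontinuous pointwise limit.
-/

open MeasureTheory Set

/-- Lebesgue measure restricted to `[0,1]`. -/
noncomputable def mu01 : Measure ℝ := volume.restrict (Icc (0:ℝ) 1)

/-- The Müntz space `M_Λ^1`: the closure in `L¹([0,1])` of the linear span of the
monomials `t ↦ t ^ Λ k`. -/
noncomputable def muntzSpace (Λ : ℕ → ℝ) : Submodule ℝ (Lp ℝ 1 mu01) :=
  (Submodule.span ℝ {f : Lp ℝ 1 mu01 |
    ∃ k : ℕ, (f : ℝ → ℝ) =ᵐ[mu01] fun t => t ^ Λ k}).topologicalClosure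

/-- A bounded linear operator between normed spaces is weakly compact if the closure,
in the weak topology of the codomain, of the image of the closed unit ball is compact. -/
def IsWeaklyCompactOperator {X Y : Type*} [NormedAddCommGroup X] [NormedSpace ℝ X]
    [NormedAddCommGroup Y] [NormedSpace ℝ Y] (S : X →L[ℝ] Y) : Prop :=
  IsCompact (closure ((toWeakSpace ℝ Y) '' (⇑S '' Metric.closedBall 0 1)))

open Filter Topology

theorem ContinuousMap.continuous_of_tendsto_of_isCompact_closure_toWeakSpace
    {X : Type*} [TopologicalSpace X] [CompactSpace X] {s : Set C(X, ℝ)}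
    (hs : IsCompact (closure (toWeakSpace ℝ C(X, ℝ) '' s)))
    {ι : Type*} {l : Filter ι} [l.NeBot] {u : ι → C(X, ℝ)} (hu : ∀ i, u i ∈ s) {φ : X → ℝ}
    (hφ : ∀ x, Tendsto (fun i => u i x) l (𝓝 (φ x))) : Continuous φ := by
  have hle : map (toWeakSpace ℝ C(X, ℝ) ∘ u) l ≤ 𝓟 (closure (toWeakSpace ℝ C(X, ℝ) '' s)) :=
    le_principal_iff.mpr <| mem_map.mpr <| univ_mem' fun i => subset_closure ⟨u i, hu i, rfl⟩
  obtain ⟨g, -, hg⟩ := hs.exists_clusterPt hle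
  suffices φ = (toWeakSpace ℝ C(X, ℝ)).symm g by rw [this]; exact ContinuousMap.continuous _
  funext x
  have hev := WeakBilin.eval_continuous (topDualPairing ℝ C(X, ℝ)).flip
    (ContinuousMap.evalCLM ℝ x)
  have hx : ClusterPt ((toWeakSpace ℝ C(X, ℝ)).symm g x) (map (fun i => u i x) l) :=
    hg.map hev.continuousAt (tendsto_map'_iff.mpr tendsto_map)
  exact (eq_of_nhds_neBot (hx.mono (hφ x))).symm

theorem not_continuous_ite_eq_one :
    ¬ Continuous fun x : Icc (0:ℝ) 1 => if (x : ℝ) = 1 then (1:ℝ) else 0 := by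
  intro h
  obtain ⟨y, hy⟩ := intermediate_value_univ ⟨0, by norm_num⟩ ⟨1, by norm_num⟩ h
    (show (1 / 2 : ℝ) ∈ Icc _ _ by norm_num)
  simp only at hy
  split_ifs at hy <;> norm_num at hy

theorem tendsto_rpow_atTop_Icc_ite {ι : Type*} {l : Filter ι} {c : ι → ℝ}
    (hc : Tendsto c l atTop) {x : ℝ} (hx : x ∈ Icc (0:ℝ) 1) :
    Tendsto (fun i => x ^ c i) l (𝓝 (if x = 1 then 1 else 0)) := by
  split_ifs with h
  · simpa [h] using tendsto_const_nhds
  · exact (tendsto_rpow_atTop_of_base_lt_one x (by linarith [hx.1])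
      (lt_of_le_of_ne hx.2 h)).comp hc

theorem tendsto_atTop_of_summable_one_div {Λ : ℕ → ℝ} (hpos : ∀ k, 0 < Λ k)
    (hsum : Summable fun k => 1 / Λ k) : Tendsto Λ atTop atTop := by
  have h : Tendsto (fun k => 1 / Λ k) atTop (𝓝[>] 0) :=
    tendsto_nhdsWithin_of_tendsto_nhds_of_eventually_within _ hsum.tendsto_atTop_zero
      (Eventually.of_forall fun k => one_div_pos.mpr (hpos k))
  simpa [Pi.inv_def] using h.inv_tendsto_nhdsGT_zero

instance isFiniteMeasure_mu01 : IsFiniteMeasure mu01 := by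
  unfold mu01; infer_instance

theorem setIntegral_Ioc_mu01 (f : ℝ → ℝ) {x : ℝ} (hx : x ≤ 1) :
    ∫ t in Ioc 0 x, f t ∂mu01 = ∫ t in Ioc 0 x, f t := by
  rw [mu01, Measure.restrict_restrict measurableSet_Ioc,
    inter_eq_left.mpr (Ioc_subset_Icc_self.trans (Icc_subset_Icc_right hx))]

theorem setIntegral_Ioc_rpow {c x : ℝ} (hc : -1 < c) (hx : 0 ≤ x) :
    ∫ t in Ioc 0 x, t ^ c = x ^ (c + 1) / (c + 1) := by
  rw [← intervalIntegral.integral_of_le hx, integral_rpow (Or.inl hc),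
    Real.zero_rpow (by linarith)]
  ring

theorem integrable_rpow_mu01 {c : ℝ} (hc : 0 ≤ c) : Integrable (fun t : ℝ => t ^ c) mu01 :=
  (Real.continuous_rpow_const hc).integrableOn_Icc

theorem exists_mem_muntzSpace_norm_le_one_setIntegral_eq_rpow {Λ : ℕ → ℝ} (k : ℕ)
    (hk : 0 ≤ Λ k) : ∃ f : muntzSpace Λ, ‖f‖ ≤ 1 ∧ ∀ x ∈ Icc (0:ℝ) 1,
      ∫ t in Ioc 0 x, ((f : Lp ℝ 1 mu01) : ℝ → ℝ) t ∂mu01 = x ^ (Λ k + 1) := by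
  set c := Λ k
  have hint := integrable_rpow_mu01 hk
  have hint' : Integrable (fun t : ℝ => (c + 1) • t ^ c) mu01 := hint.smul (c + 1)
  have hmem : hint'.toL1 _ ∈ muntzSpace Λ := by
    rw [Integrable.toL1_smul _ hint]
    exact Submodule.le_topologicalClosure _ <|
      Submodule.smul_mem _ _ (Submodule.subset_span ⟨k, hint.coeFn_toL1⟩)
  have hintegral : ∀ x ∈ Icc (0:ℝ) 1,
      ∫ t in Ioc 0 x, (c + 1) • t ^ c ∂mu01 = x ^ (c + 1) := fun x hx => by
    rw [setIntegral_Ioc_mu01 _ hx.2, integral_smul, setIntegral_Ioc_rpow (by linarith) hx.1,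
      smul_eq_mul, mul_div_cancel₀ _ (by linarith)]
  refine ⟨⟨_, hmem⟩, le_of_eq ?_, fun x hx => ?_⟩
  · calc ‖hint'.toL1 _‖ = ∫ t in Icc 0 1, ‖(c + 1) • t ^ c‖ := L1.norm_of_fun_eq_integral_norm _
      _ = ∫ t in Ioc 0 1, (c + 1) • t ^ c := by
          rw [integral_Icc_eq_integral_Ioc]
          refine setIntegral_congr_fun measurableSet_Ioc fun t ht => ?_
          exact Real.norm_of_nonneg (smul_nonneg (by linarith) (Real.rpow_nonneg ht.1.le c))
      _ = 1 := by rw [← setIntegral_Ioc_mu01 _ le_rfl, hintegral 1 (by simp), Real.one_rpow]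
  · rw [← hintegral x hx]
    exact integral_congr_ae (ae_restrict_of_ae hint'.coeFn_toL1)

theorem volterra_restriction_not_weaklyCompact
    (Λ : ℕ → ℝ) (hpos : ∀ k, 0 < Λ k)
    (hmuntz : Summable fun k => 1 / Λ k)
    (V : ↥(muntzSpace Λ) →L[ℝ] C(Icc (0:ℝ) 1, ℝ))
    (hV : ∀ (f : ↥(muntzSpace Λ)) (x : Icc (0:ℝ) 1),
      V f x = ∫ t in Ioc (0:ℝ) (x:ℝ), ((f : Lp ℝ 1 mu01) : ℝ → ℝ) t ∂mu01) :
    ¬ IsWeaklyCompactOperator V := by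
  intro hV_compact
  choose f hf_norm hf_integral using
    fun k => exists_mem_muntzSpace_norm_le_one_setIntegral_eq_rpow k (hpos k).le
  have hΛ : Tendsto (fun k => Λ k + 1) atTop atTop :=
    tendsto_atTop_add_const_right _ 1 (tendsto_atTop_of_summable_one_div hpos hmuntz)
  have hball : ∀ k, V (f k) ∈ V '' Metric.closedBall 0 1 :=
    fun k => ⟨f k, mem_closedBall_zero_iff.mpr (hf_norm k), rfl⟩
  have hlim : ∀ x : Icc (0:ℝ) 1, Tendsto (fun k => V (f k) x) atTop
      (𝓝 (if (x : ℝ) = 1 then 1 else 0)) := fun x => by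
    simpa only [hV, hf_integral _ x x.2] using tendsto_rpow_atTop_Icc_ite hΛ x.2
  exact not_continuous_ite_eq_one
    (ContinuousMap.continuous_of_tendsto_of_isCompact_closure_toWeakSpace hV_compact hball hlim)
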